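/- arXiv:2501.19089 — 6 statements merged into one kernel-verified Lean document; each statement's English description precedes it below -/
import Mathlib

section
/- Let A be an n×n real row-stochastic matrix with all entries strictly positive, let X^0 be an n×f real matrix, and let (W^l)_{l≥0} be a sequence of f×f real matrices such that the operator norms of the products satisfy ‖W^0 W^1 ⋯ W^L‖ ≤ K for all L and some constant K. Define the layer iterates X^{l+1} = A X^l W^l. Then for every pair of indices i, j, the difference of rows satisfies ‖(X^L)_i − (X^L)_j‖ → 0 as L → ∞; in particular the Dirichlet energy E(X^L) = (1/n) Σ_{i} Σ_{j ∈ N(i)} ‖(X^L)_i − (X^L)_j‖² tends to 0 for any fixed edge set, i.e., the network exhibits oversmoothing. -/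
open Finset Filter Matrix

/-- Oscillation contraction for a positive row-stochastic matrix. -/
lemma osc_step_aux {n : ℕ} [Nonempty (Fin n)] (A : Matrix (Fin n) (Fin n) ℝ)
    (hA0 : ∀ i j, 0 ≤ A i j) (hrow : ∀ i, ∑ j, A i j = 1)
    (m : ℝ) (hm : ∀ i j, m ≤ A i j) (v : Fin n → ℝ) :
    univ.sup' univ_nonempty (A.mulVec v) - univ.inf' univ_nonempty (A.mulVec v)
      ≤ (1 - 2*m) * (univ.sup' univ_nonempty v - univ.inf' univ_nonempty v) := by
  set Mx := univ.sup' univ_nonempty v with hMx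
  set mn := univ.inf' univ_nonempty v with hmn
  have hle : mn ≤ Mx := by
    obtain ⟨i0⟩ : Nonempty (Fin n) := inferInstance
    exact le_trans (inf'_le _ (mem_univ i0)) (le_sup' _ (mem_univ i0))
  have hupper : ∀ i, A.mulVec v i ≤ Mx - m * (Mx - mn) := by
    intro i
    obtain ⟨k0, -, hk0⟩ := Finset.exists_mem_eq_inf' (univ_nonempty (α := Fin n)) v
    have h1 : A.mulVec v i = A i k0 * v k0 + ∑ k ∈ univ.erase k0, A i k * v k := by
      rw [show A.mulVec v i = ∑ k, A i k * v k from by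
        simp [Matrix.mulVec, dotProduct]]
      exact (Finset.add_sum_erase univ (fun k => A i k * v k) (mem_univ k0)).symm
    have h2 : ∑ k ∈ univ.erase k0, A i k * v k ≤ (∑ k ∈ univ.erase k0, A i k) * Mx := by
      rw [Finset.sum_mul]
      exact Finset.sum_le_sum fun k _ =>
        mul_le_mul_of_nonneg_left (le_sup' v (mem_univ k)) (hA0 i k)
    have h3 : ∑ k ∈ univ.erase k0, A i k = 1 - A i k0 := by
      have h5 := Finset.add_sum_erase univ (fun k => A i k) (mem_univ k0)
      rw [hrow i] at h5
      linarith
    have hv : mn = v k0 := hk0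
    have hk : m ≤ A i k0 := hm i k0
    rw [h3] at h2
    rw [h1, ← hv]
    nlinarith [mul_nonneg (sub_nonneg.2 hk) (sub_nonneg.2 hle)]
  have hlower : ∀ i, mn + m * (Mx - mn) ≤ A.mulVec v i := by
    intro i
    obtain ⟨k0, -, hk0⟩ := Finset.exists_mem_eq_sup' (univ_nonempty (α := Fin n)) v
    have h1 : A.mulVec v i = A i k0 * v k0 + ∑ k ∈ univ.erase k0, A i k * v k := by
      rw [show A.mulVec v i = ∑ k, A i k * v k from by
        simp [Matrix.mulVec, dotProduct]]
      exact (Finset.add_sum_erase univ (fun k => A i k * v k) (mem_univ k0)).symm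
    have h2 : (∑ k ∈ univ.erase k0, A i k) * mn ≤ ∑ k ∈ univ.erase k0, A i k * v k := by
      rw [Finset.sum_mul]
      exact Finset.sum_le_sum fun k _ =>
        mul_le_mul_of_nonneg_left (inf'_le v (mem_univ k)) (hA0 i k)
    have h3 : ∑ k ∈ univ.erase k0, A i k = 1 - A i k0 := by
      have h5 := Finset.add_sum_erase univ (fun k => A i k) (mem_univ k0)
      rw [hrow i] at h5
      linarith
    have hv : Mx = v k0 := hk0
    have hk : m ≤ A i k0 := hm i k0
    rw [h3] at h2
    rw [h1, ← hv]
    nlinarith [mul_nonneg (sub_nonneg.2 hk) (sub_nonneg.2 hle)]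
  have hs : univ.sup' univ_nonempty (A.mulVec v) ≤ Mx - m * (Mx - mn) :=
    Finset.sup'_le _ _ fun i _ => hupper i
  have hi : mn + m * (Mx - mn) ≤ univ.inf' univ_nonempty (A.mulVec v) :=
    Finset.le_inf' _ _ fun i _ => hlower i
  linarith

/-- **Linear discrete-depth GNNs oversmooth.**
Let `A` be an `n × n` positive row-stochastic matrix, let the weight products
`W 0 * ⋯ * W L` have operator norm at most `K` for all `L`, and let the layers
evolve by `X (l+1) = A * X l * W l`.  Then all pairwise differences of rows of
`X L` tend to zero, and in particular the Dirichlet energy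
`(1/n) ∑ i ∑ j ∈ N i, ‖(X L) i − (X L) j‖²` tends to zero for any edge set. -/
theorem linear_aggregation_oversmooths
    {n f : ℕ} (A : Matrix (Fin n) (Fin n) ℝ)
    (hpos : ∀ i j, 0 < A i j) (hrow : ∀ i, ∑ j, A i j = 1)
    (X : ℕ → Matrix (Fin n) (Fin f) ℝ)
    (W : ℕ → Matrix (Fin f) (Fin f) ℝ)
    (K : ℝ)
    (hW : ∀ L : ℕ, ∀ v : Fin f → ℝ,
      ‖Matrix.vecMul v (((List.range (L + 1)).map W).prod)‖ ≤ K * ‖v‖)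
    (hX : ∀ l, X (l + 1) = A * X l * W l) :
    (∀ i j : Fin n,
      Filter.Tendsto (fun L : ℕ => ∑ k, (X L i k - X L j k) ^ 2)
        Filter.atTop (nhds 0)) ∧
    ∀ N : Fin n → Finset (Fin n),
      Filter.Tendsto
        (fun L : ℕ => (1 / (n : ℝ)) * ∑ i, ∑ j ∈ N i, ∑ k, (X L i k - X L j k) ^ 2)
        Filter.atTop (nhds 0) := by
  rcases Nat.eq_zero_or_pos n with hn | hn
  · subst hn
    constructor
    · intro i; exact absurd i.isLt (by omega)
    · intro N
      simp only [Finset.univ_eq_empty, Finset.sum_empty, mul_zero]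
      exact tendsto_const_nhds
  · haveI : NeZero n := ⟨hn.ne'⟩
    haveI : Nonempty (Fin n) := ⟨⟨0, hn⟩⟩
    have hS : (univ : Finset (Fin n)).Nonempty := univ_nonempty
    set m := univ.inf' hS (fun i => univ.inf' hS (fun j => A i j)) with hmdef
    have hm_le : ∀ i j, m ≤ A i j := fun i j =>
      le_trans (inf'_le _ (mem_univ i)) (inf'_le _ (mem_univ j))
    have hm_pos : 0 < m := by
      rw [hmdef, Finset.lt_inf'_iff]
      intro i _
      rw [Finset.lt_inf'_iff]
      intro j _
      exact hpos i j
    set q := max (1 - 2*m) 0 with hqdef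
    have hq0 : 0 ≤ q := le_max_right _ _
    have hq1 : q < 1 := max_lt (by linarith) one_pos
    -- oscillation of columns
    set osc : (Fin n → ℝ) → ℝ := fun v => univ.sup' hS v - univ.inf' hS v with hoscdef
    have hosc0 : ∀ v, 0 ≤ osc v := by
      intro v
      obtain ⟨i0⟩ : Nonempty (Fin n) := inferInstance
      have := le_trans (inf'_le v (mem_univ i0)) (le_sup' v (mem_univ i0))
      simp only [hoscdef]; linarith
    set col : ℕ → Fin f → Fin n → ℝ := fun L k r => (A ^ L * X 0) r k with hcoldef
    have hcolstep : ∀ L k, osc (col (L+1) k) ≤ q * osc (col L k) := by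
      intro L k
      have hcol_eq : col (L+1) k = A.mulVec (col L k) := by
        have hM : A ^ (L+1) * X 0 = A * (A ^ L * X 0) := by
          rw [pow_succ', Matrix.mul_assoc]
        funext r
        show (A ^ (L+1) * X 0) r k = _
        rw [hM]
        simp [Matrix.mul_apply, Matrix.mulVec, dotProduct, hcoldef]
      rw [hcol_eq]
      calc osc (A.mulVec (col L k)) ≤ (1 - 2*m) * osc (col L k) :=
            osc_step_aux A (fun i j => (hpos i j).le) hrow m hm_le _
        _ ≤ q * osc (col L k) :=
            mul_le_mul_of_nonneg_right (le_max_left _ _) (hosc0 _)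
    have hcolL : ∀ L k, osc (col L k) ≤ q ^ L * osc (col 0 k) := by
      intro L k
      induction L with
      | zero => simp
      | succ L ih =>
        calc osc (col (L+1) k) ≤ q * osc (col L k) := hcolstep L k
          _ ≤ q * (q ^ L * osc (col 0 k)) := mul_le_mul_of_nonneg_left ih hq0
          _ = q ^ (L+1) * osc (col 0 k) := by ring
    set B : ℝ := ∑ k, osc (col 0 k) with hBdef
    have hB : ∀ k, osc (col 0 k) ≤ B :=
      fun k => Finset.single_le_sum (fun k _ => hosc0 _) (mem_univ k)
    have hB0 : 0 ≤ B := Finset.sum_nonneg fun k _ => hosc0 _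
    have hd : ∀ L (i j : Fin n) (k : Fin f), |col L k i - col L k j| ≤ q ^ L * B := by
      intro L i j k
      have h1 : |col L k i - col L k j| ≤ osc (col L k) := by
        have hi1 := le_sup' (col L k) (mem_univ i)
        have hi2 := inf'_le (col L k) (mem_univ j)
        have hj1 := le_sup' (col L k) (mem_univ j)
        have hj2 := inf'_le (col L k) (mem_univ i)
        rw [abs_sub_le_iff]
        constructor <;> [skip; skip] <;> simp only [hoscdef] <;> linarith
      calc |col L k i - col L k j| ≤ osc (col L k) := h1
        _ ≤ q ^ L * osc (col 0 k) := hcolL L k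
        _ ≤ q ^ L * B := mul_le_mul_of_nonneg_left (hB k) (pow_nonneg hq0 L)
    -- product formula
    have hP : ∀ L, X L = A ^ L * X 0 * ((List.range L).map W).prod := by
      intro L
      induction L with
      | zero => simp
      | succ L ih =>
        rw [hX, ih, List.range_succ, List.map_append, List.prod_append]
        simp only [List.map_cons, List.map_nil, List.prod_cons, List.prod_nil,
          Matrix.mul_one, pow_succ']
        simp only [Matrix.mul_assoc]
    -- key pointwise bound
    have key : ∀ (i j : Fin n) (L : ℕ),
        ∑ k, (X (L+1) i k - X (L+1) j k) ^ 2
          ≤ (f : ℝ) * (K^2 * (q ^ (L+1) * B)^2) := by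
      intro i j L
      set d : Fin f → ℝ := fun c => (A ^ (L+1) * X 0) i c - (A ^ (L+1) * X 0) j c with hddef
      set P := ((List.range (L+1)).map W).prod with hPdef
      have hrowdiff : ∀ k, X (L+1) i k - X (L+1) j k = Matrix.vecMul d P k := by
        intro k
        rw [hP (L+1)]
        simp [hddef, hPdef, Matrix.mul_apply, Matrix.vecMul, dotProduct, sub_mul,
          Finset.sum_sub_distrib]
      have hdn : ‖d‖ ≤ q ^ (L+1) * B := by
        rw [pi_norm_le_iff_of_nonneg (by positivity)]
        intro c
        rw [Real.norm_eq_abs]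
        exact hd (L+1) i j c
      have hvm : ‖Matrix.vecMul d P‖ ≤ K * ‖d‖ := hW L d
      have hterm : ∀ k, (X (L+1) i k - X (L+1) j k) ^ 2 ≤ K^2 * (q ^ (L+1) * B)^2 := by
        intro k
        rw [hrowdiff k]
        have h1 : |Matrix.vecMul d P k| ≤ ‖Matrix.vecMul d P‖ := by
          rw [← Real.norm_eq_abs]; exact norm_le_pi_norm _ k
        have h2 : ‖Matrix.vecMul d P‖ ^ 2 ≤ (K * ‖d‖) ^ 2 :=
          pow_le_pow_left₀ (norm_nonneg _) hvm 2
        have h3 : (Matrix.vecMul d P k) ^ 2 ≤ ‖Matrix.vecMul d P‖ ^ 2 := by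
          rw [← sq_abs]
          exact pow_le_pow_left₀ (abs_nonneg _) h1 2
        have h4 : (K * ‖d‖) ^ 2 ≤ K^2 * (q ^ (L+1) * B)^2 := by
          rw [mul_pow]
          exact mul_le_mul_of_nonneg_left
            (pow_le_pow_left₀ (norm_nonneg _) hdn 2) (sq_nonneg K)
        linarith
      calc ∑ k, (X (L+1) i k - X (L+1) j k) ^ 2
          ≤ (univ : Finset (Fin f)).card • (K^2 * (q ^ (L+1) * B)^2) :=
            Finset.sum_le_card_nsmul _ _ _ fun k _ => hterm k
        _ = (f : ℝ) * (K^2 * (q ^ (L+1) * B)^2) := by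
            simp [nsmul_eq_mul]
    -- first conclusion
    have first : ∀ i j : Fin n,
        Tendsto (fun L : ℕ => ∑ k, (X L i k - X L j k) ^ 2) atTop (nhds 0) := by
      intro i j
      have hb : Tendsto (fun L : ℕ => (f : ℝ) * (K^2 * B^2) * (q^2) ^ L) atTop (nhds 0) := by
        have := tendsto_pow_atTop_nhds_zero_of_lt_one (sq_nonneg q)
          (by nlinarith : q^2 < 1)
        simpa using this.const_mul ((f : ℝ) * (K^2 * B^2))
      apply tendsto_of_tendsto_of_tendsto_of_le_of_le' tendsto_const_nhds hb
      · exact Filter.Eventually.of_forall fun L =>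
          Finset.sum_nonneg fun k _ => sq_nonneg _
      · filter_upwards [eventually_ge_atTop 1] with L hL
        rcases L with _ | L'
        · omega
        · calc ∑ k, (X (L'+1) i k - X (L'+1) j k) ^ 2
              ≤ (f : ℝ) * (K^2 * (q ^ (L'+1) * B)^2) := key i j L'
            _ = (f : ℝ) * (K^2 * B^2) * (q^2) ^ (L'+1) := by ring
    refine ⟨first, ?_⟩
    intro N
    have h2 : Tendsto (fun L : ℕ => ∑ i, ∑ j ∈ N i, ∑ k, (X L i k - X L j k) ^ 2)
        atTop (nhds 0) := by
      have := tendsto_finset_sum (univ : Finset (Fin n))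
        (fun i _ => tendsto_finset_sum (N i) fun j _ => first i j)
      simpa using this
    simpa using h2.const_mul (1 / (n : ℝ))
end

section
/- Let L be an n×n real symmetric positive semidefinite matrix whose kernel is exactly the span of the all-ones vector 𝟙, and let b ∈ ℝ^n be constant. Then every solution x(t) of the ODE ẋ(t) = −L x(t) + b satisfies: (i) 𝟙ᵀx(t) = 𝟙ᵀx(0) + t·(𝟙ᵀb); (ii) the function x(t) − t·((𝟙ᵀb)/n)·𝟙 converges to a finite limit as t → ∞; and in particular x(t)/t → ((𝟙ᵀb)/n)·𝟙, so the solution is asymptotically dominated by the consensus (all-ones) direction. -/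
open Filter Finset Matrix

lemma aux_sum_mulVec {n : ℕ} {L : Matrix (Fin n) (Fin n) ℝ} (hsymm : L.IsSymm)
    (h1 : L.mulVec (fun _ => 1) = 0) (v : Fin n → ℝ) :
    ∑ i, L.mulVec v i = 0 := by
  have hcol : ∀ j, ∑ i, L i j = 0 := by
    intro j
    have h := congrFun h1 j
    simp only [Matrix.mulVec, dotProduct, mul_one, Pi.zero_apply] at h
    calc ∑ i, L i j = ∑ i, L j i := by
          refine Finset.sum_congr rfl fun i _ => ?_
          exact (hsymm.apply j i)
      _ = 0 := h
  calc ∑ i, L.mulVec v i = ∑ i, ∑ j, L i j * v j := rfl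
    _ = ∑ j, (∑ i, L i j) * v j := by rw [Finset.sum_comm]; simp [Finset.sum_mul]
    _ = 0 := by simp [hcol]

lemma aux_surj {n : ℕ} (hn : 0 < n) (L : Matrix (Fin n) (Fin n) ℝ)
    (hsymm : L.IsSymm)
    (hker : ∀ v : Fin n → ℝ, L.mulVec v = 0 ↔ ∃ c : ℝ, v = fun _ => c)
    (u : Fin n → ℝ) (hu : ∑ i, u i = 0) : ∃ z, L.mulVec z = u := by
  classical
  set T := L.mulVecLin with hT
  have hone : (fun _ : Fin n => (1:ℝ)) ≠ 0 := by
    intro h; exact one_ne_zero (congrFun h ⟨0, hn⟩)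
  have hkerT : LinearMap.ker T = Submodule.span ℝ {(fun _ : Fin n => (1:ℝ))} := by
    ext v
    simp only [LinearMap.mem_ker, hT, Matrix.mulVecLin_apply,
      Submodule.mem_span_singleton]
    rw [hker]
    constructor
    · rintro ⟨c, rfl⟩; exact ⟨c, by ext i; simp⟩
    · rintro ⟨c, rfl⟩; exact ⟨c, by ext i; simp⟩
  have hkerdim : Module.finrank ℝ (LinearMap.ker T) = 1 := by
    rw [hkerT]; exact finrank_span_singleton hone
  have hrk := LinearMap.finrank_range_add_finrank_ker T
  rw [hkerdim, Module.finrank_pi] at hrk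
  -- the sum functional
  let f : (Fin n → ℝ) →ₗ[ℝ] ℝ :=
    { toFun := fun v => ∑ i, v i
      map_add' := fun a b => by simp [Finset.sum_add_distrib]
      map_smul' := fun c a => by simp [Finset.mul_sum] }
  have hfsurj : Function.Surjective f := by
    intro r
    refine ⟨fun _ => r / n, ?_⟩
    have hn' : (n:ℝ) ≠ 0 := Nat.cast_ne_zero.mpr hn.ne'
    simp only [f, LinearMap.coe_mk, AddHom.coe_mk]
    rw [Finset.sum_const, Finset.card_univ, Fintype.card_fin, nsmul_eq_mul]
    field_simp
  have hfk := LinearMap.finrank_range_add_finrank_ker f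
  rw [LinearMap.range_eq_top.mpr hfsurj, finrank_top, Module.finrank_pi,
    Module.finrank_self] at hfk
  have h1 : L.mulVec (fun _ => 1) = 0 := (hker _).mpr ⟨1, rfl⟩
  have hle : LinearMap.range T ≤ LinearMap.ker f := by
    rintro v ⟨w, rfl⟩
    simp only [LinearMap.mem_ker, hT, Matrix.mulVecLin_apply]
    exact aux_sum_mulVec hsymm h1 w
  have heq : LinearMap.range T = LinearMap.ker f := by
    apply Submodule.eq_of_le_of_finrank_le hle
    omega
  have hu' : u ∈ LinearMap.range T := by
    rw [heq]; exact hu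
  obtain ⟨z, hz⟩ := hu'
  exact ⟨z, hz⟩

lemma aux_gap {n : ℕ} (hn : 0 < n) (L : Matrix (Fin n) (Fin n) ℝ) (hpsd : L.PosSemidef)
    (hker : ∀ v : Fin n → ℝ, L.mulVec v = 0 ↔ ∃ c : ℝ, v = fun _ => c) :
    ∃ lam : ℝ, 0 < lam ∧ ∀ v : Fin n → ℝ, ∑ i, v i = 0 →
      lam * ∑ i, (v i)^2 ≤ v ⬝ᵥ L.mulVec v := by
  classical
  have hscale : ∀ v : Fin n → ℝ, ∑ i, v i = 0 → ∑ i, (v i)^2 ≠ 0 →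
      ∃ u : Fin n → ℝ, (∑ i, u i = 0 ∧ ∑ i, (u i)^2 = 1) ∧
        v ⬝ᵥ L.mulVec v = (∑ i, (v i)^2) * (u ⬝ᵥ L.mulVec u) := by
    intro v hv hs
    have hsnn : 0 ≤ ∑ i, (v i)^2 := Finset.sum_nonneg fun i _ => sq_nonneg _
    have hspos : 0 < ∑ i, (v i)^2 := lt_of_le_of_ne hsnn (Ne.symm hs)
    set r := Real.sqrt (∑ i, (v i)^2) with hr
    have hrpos : 0 < r := Real.sqrt_pos.mpr hspos
    have hr2 : r ^ 2 = ∑ i, (v i)^2 := Real.sq_sqrt hsnn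
    refine ⟨r⁻¹ • v, ⟨?_, ?_⟩, ?_⟩
    · simp only [Pi.smul_apply, smul_eq_mul, ← Finset.mul_sum, hv, mul_zero]
    · simp only [Pi.smul_apply, smul_eq_mul, mul_pow, ← Finset.mul_sum, ← hr2]
      field_simp
    · rw [smul_dotProduct, Matrix.mulVec_smul, dotProduct_smul]
      rw [← hr2]
      simp only [smul_eq_mul]
      field_simp
  by_cases hC : ∃ v : Fin n → ℝ, ∑ i, v i = 0 ∧ ∑ i, (v i)^2 = 1
  · set C : Set (Fin n → ℝ) := {v | ∑ i, v i = 0 ∧ ∑ i, (v i)^2 = 1} with hCdef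
    have hsumc : Continuous fun v : Fin n → ℝ => ∑ i, v i :=
      continuous_finset_sum _ fun i _ => continuous_apply i
    have hsqc : Continuous fun v : Fin n → ℝ => ∑ i, (v i)^2 :=
      continuous_finset_sum _ fun i _ => (continuous_apply i).pow 2
    have hqc : Continuous fun v : Fin n → ℝ => v ⬝ᵥ L.mulVec v := by
      simp only [dotProduct, Matrix.mulVec]
      exact continuous_finset_sum _ fun i _ => (continuous_apply i).mul
        (continuous_finset_sum _ fun j _ => continuous_const.mul (continuous_apply j))
    have hCclosed : IsClosed C := by
      have : C = (fun v : Fin n → ℝ => ∑ i, v i) ⁻¹' {0} ∩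
          (fun v : Fin n → ℝ => ∑ i, (v i)^2) ⁻¹' {1} := by
        ext v; simp [hCdef]
      rw [this]
      exact (isClosed_singleton.preimage hsumc).inter (isClosed_singleton.preimage hsqc)
    have hCbdd : Bornology.IsBounded C := by
      rw [Metric.isBounded_iff_subset_closedBall 0]
      refine ⟨1, fun v hv => ?_⟩
      rw [Metric.mem_closedBall, dist_zero_right]
      rw [pi_norm_le_iff_of_nonneg zero_le_one]
      intro i
      rw [Real.norm_eq_abs, ← Real.sqrt_one, ← Real.sqrt_sq_eq_abs]
      apply Real.sqrt_le_sqrt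
      rw [← hv.2]
      exact Finset.single_le_sum (fun j _ => sq_nonneg (v j)) (Finset.mem_univ i)
    have hCc : IsCompact C := Metric.isCompact_of_isClosed_isBounded hCclosed hCbdd
    obtain ⟨v0, hv0C, hmin⟩ := hCc.exists_isMinOn hC hqc.continuousOn
    set lam := v0 ⬝ᵥ L.mulVec v0 with hlam
    have hlamnn : 0 ≤ lam := by
      have := hpsd.dotProduct_mulVec_nonneg v0
      simpa using this
    have hlampos : 0 < lam := by
      rcases hlamnn.lt_or_eq with h | h
      · exact h
      · exfalso
        have hz : star v0 ⬝ᵥ L.mulVec v0 = 0 := by simpa using h.symm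
        have hLv0 : L.mulVec v0 = 0 := (hpsd.dotProduct_mulVec_zero_iff v0).mp hz
        obtain ⟨c, hc⟩ := (hker v0).mp hLv0
        have hsum0 : (n : ℝ) * c = 0 := by
          have := hv0C.1
          rw [hc] at this
          simpa [Finset.sum_const, Finset.card_univ, nsmul_eq_mul] using this
        have hc0 : c = 0 := by
          have hn' : (n:ℝ) ≠ 0 := Nat.cast_ne_zero.mpr hn.ne'
          exact (mul_eq_zero.mp hsum0).resolve_left hn'
        have := hv0C.2
        rw [hc, hc0] at this
        simp at this
    refine ⟨lam, hlampos, fun v hv => ?_⟩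
    by_cases h0 : ∑ i, (v i)^2 = 0
    · have hv0 : v = 0 := by
        funext i
        have := (Finset.sum_eq_zero_iff_of_nonneg fun j _ => sq_nonneg (v j)).mp h0
        exact (pow_eq_zero_iff two_ne_zero).mp (this i (Finset.mem_univ i))
      simp [hv0, zero_dotProduct]
    · obtain ⟨u, huC, hqeq⟩ := hscale v hv h0
      rw [hqeq]
      have := hmin huC
      have hsnn : 0 ≤ ∑ i, (v i)^2 := Finset.sum_nonneg fun i _ => sq_nonneg _
      calc lam * ∑ i, (v i)^2 = (∑ i, (v i)^2) * lam := mul_comm _ _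
        _ ≤ (∑ i, (v i)^2) * (u ⬝ᵥ L.mulVec u) := mul_le_mul_of_nonneg_left this hsnn
  · refine ⟨1, one_pos, fun v hv => ?_⟩
    by_cases h0 : ∑ i, (v i)^2 = 0
    · have hv0 : v = 0 := by
        funext i
        have := (Finset.sum_eq_zero_iff_of_nonneg fun j _ => sq_nonneg (v j)).mp h0
        exact (pow_eq_zero_iff two_ne_zero).mp (this i (Finset.mem_univ i))
      simp [hv0, zero_dotProduct]
    · exfalso
      obtain ⟨u, huC, _⟩ := hscale v hv h0
      exact hC ⟨u, huC⟩

lemma aux_decay {E : ℝ → ℝ} {E' : ℝ → ℝ} {lam : ℝ} (hlam : 0 < lam)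
    (hE : ∀ t, HasDerivAt E (E' t) t) (hE' : ∀ t, E' t ≤ -(2*lam) * E t)
    (hE0 : ∀ t, 0 ≤ E t) : Tendsto E atTop (nhds 0) := by
  set F : ℝ → ℝ := fun t => E t * Real.exp (2*lam*t) with hF
  have hexp : ∀ t : ℝ, HasDerivAt (fun s : ℝ => Real.exp (2*lam*s))
      (2*lam*Real.exp (2*lam*t)) t := by
    intro t
    have h1 : HasDerivAt (fun s : ℝ => 2*lam*s) (2*lam) t := by
      simpa using (hasDerivAt_id t).const_mul (2*lam)
    have := h1.exp
    simpa [mul_comm] using this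
  have hFd : ∀ t, HasDerivAt F
      (E' t * Real.exp (2*lam*t) + E t * (2*lam*Real.exp (2*lam*t))) t :=
    fun t => (hE t).mul (hexp t)
  have hanti : Antitone F := by
    apply antitone_of_deriv_nonpos
    · exact fun t => ((hFd t).differentiableAt)
    · intro t
      rw [(hFd t).deriv]
      nlinarith [Real.exp_pos (2*lam*t), hE' t,
        mul_le_mul_of_nonneg_right (hE' t) (Real.exp_pos (2*lam*t)).le]
  have hbound : ∀ t : ℝ, 0 ≤ t → E t ≤ E 0 * Real.exp (-(2*lam*t)) := by
    intro t ht
    have h1 : F t ≤ F 0 := hanti ht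
    have h2 : F 0 = E 0 := by simp [hF]
    have h3 : E t = F t * Real.exp (-(2*lam*t)) := by
      rw [hF]
      simp only []
      rw [mul_assoc, ← Real.exp_add]
      simp
    rw [h3]
    exact mul_le_mul_of_nonneg_right (h2 ▸ h1) (Real.exp_pos _).le
  have hlim : Tendsto (fun t : ℝ => E 0 * Real.exp (-(2*lam*t))) atTop (nhds 0) := by
    have h1 : Tendsto (fun t : ℝ => 2*lam*t) atTop atTop :=
      Tendsto.const_mul_atTop (by positivity) tendsto_id
    have h2 : Tendsto (fun t : ℝ => Real.exp (-(2*lam*t))) atTop (nhds 0) :=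
      Real.tendsto_exp_neg_atTop_nhds_zero.comp h1
    simpa using h2.const_mul (E 0)
  apply tendsto_of_tendsto_of_tendsto_of_le_of_le' tendsto_const_nhds hlim
  · exact Filter.Eventually.of_forall fun t => hE0 t
  · exact Filter.eventually_atTop.mpr ⟨0, hbound⟩


/-- **Laplacian dynamics with a constant external input (GRAND++-ℓ) oversmooth.**
If `L` is symmetric positive semidefinite with kernel exactly the span of the
all-ones vector and `b` is constant, then every solution of `ẋ = −L x + b`
satisfies (i) `𝟙ᵀ x(t) = 𝟙ᵀ x(0) + t (𝟙ᵀ b)`, (ii) `x(t) − t ((𝟙ᵀb)/n) 𝟙`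
converges to a finite limit, and (iii) `x(t)/t → ((𝟙ᵀb)/n) 𝟙`. -/
theorem laplacian_dynamics_with_input_oversmooth
    {n : ℕ} (hn : 0 < n) (L : Matrix (Fin n) (Fin n) ℝ)
    (hsymm : L.IsSymm) (hpsd : L.PosSemidef)
    (hker : ∀ v : Fin n → ℝ, L.mulVec v = 0 ↔ ∃ c : ℝ, v = fun _ => c)
    (b : Fin n → ℝ) (x : ℝ → Fin n → ℝ)
    (hx : ∀ t : ℝ, HasDerivAt x (-(L.mulVec (x t)) + b) t) :
    (∀ t : ℝ, ∑ i, x t i = ∑ i, x 0 i + t * ∑ i, b i) ∧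
    (∃ y : Fin n → ℝ,
      Filter.Tendsto (fun t : ℝ => x t - t • (fun _ : Fin n => (∑ i, b i) / n))
        Filter.atTop (nhds y)) ∧
    Filter.Tendsto (fun t : ℝ => t⁻¹ • x t) Filter.atTop
      (nhds (fun _ : Fin n => (∑ i, b i) / n)) := by
  classical
  have h1 : L.mulVec (fun _ => 1) = 0 := (hker _).mpr ⟨1, rfl⟩
  have hn' : (n:ℝ) ≠ 0 := Nat.cast_ne_zero.mpr hn.ne'
  set β : ℝ := (∑ i, b i) / n with hβ
  set c : Fin n → ℝ := fun _ => β with hc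
  have hxc : ∀ (t : ℝ) i, HasDerivAt (fun s => x s i) ((-(L.mulVec (x t)) + b) i) t :=
    fun t i => hasDerivAt_pi.mp (hx t) i
  -- part (i)
  have hsum_deriv : ∀ t : ℝ, HasDerivAt (fun s => ∑ i, x s i) (∑ i, b i) t := by
    intro t
    have h := HasDerivAt.fun_sum (fun i (_ : i ∈ Finset.univ) => hxc t i)
    have heq : ∑ i, (-(L.mulVec (x t)) + b) i = ∑ i, b i := by
      simp only [Pi.add_apply, Pi.neg_apply]
      rw [Finset.sum_add_distrib, Finset.sum_neg_distrib,
        aux_sum_mulVec hsymm h1 (x t)]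
      simp
    rwa [heq] at h
  have part1 : ∀ t : ℝ, ∑ i, x t i = ∑ i, x 0 i + t * ∑ i, b i := by
    intro t
    have key : ∀ s : ℝ, HasDerivAt (fun r : ℝ => (∑ i, x r i) - r * ∑ i, b i) 0 s := by
      intro s
      have := (hsum_deriv s).fun_sub ((hasDerivAt_id s).mul_const (∑ i, b i))
      simpa using this
    have hconst := is_const_of_deriv_eq_zero (𝕜 := ℝ)
      (fun s => (key s).differentiableAt) (fun s => (key s).deriv) t 0
    simp only [zero_mul, sub_zero] at hconst
    linarith [hconst]
  -- source decomposition
  have hbc : ∑ i, (b - c) i = 0 := by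
    simp only [Pi.sub_apply, hc]
    rw [Finset.sum_sub_distrib, Finset.sum_const, Finset.card_univ, Fintype.card_fin,
      nsmul_eq_mul, hβ]
    field_simp
    ring
  obtain ⟨z, hz⟩ := aux_surj hn L hsymm hker (b - c) hbc
  set y : ℝ → Fin n → ℝ := fun t => x t - t • c - z with hy
  have hLc : ∀ s : ℝ, L.mulVec (s • c) = 0 := by
    intro s
    have hrw : (s • c) = (s*β) • (fun _ : Fin n => (1:ℝ)) := by
      ext i; simp [hc]
    rw [hrw, Matrix.mulVec_smul, h1, smul_zero]
  have hyd : ∀ t, HasDerivAt y (-(L.mulVec (y t))) t := by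
    intro t
    have hsc : HasDerivAt (fun s : ℝ => s • c) c t := by
      simpa using (hasDerivAt_id t).smul_const c
    have h := ((hx t).sub hsc).sub_const z
    have heq : -(L.mulVec (y t)) = -(L.mulVec (x t)) + b - c := by
      have hLy : L.mulVec (y t) = L.mulVec (x t) - (b - c) := by
        rw [hy]
        simp only
        rw [Matrix.mulVec_sub, Matrix.mulVec_sub, hz, hLc t]
        simp
      rw [hLy]
      ext i; simp; ring
    rwa [heq]
  have hysum : ∀ t, ∑ i, y t i = ∑ i, y 0 i := by
    intro t
    have key : ∀ s : ℝ, HasDerivAt (fun r : ℝ => ∑ i, y r i) 0 s := by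
      intro s
      have h := HasDerivAt.fun_sum (fun i (_ : i ∈ Finset.univ) =>
        hasDerivAt_pi.mp (hyd s) i)
      have heq : ∑ i, (-(L.mulVec (y s))) i = 0 := by
        simp only [Pi.neg_apply]
        rw [Finset.sum_neg_distrib, aux_sum_mulVec hsymm h1 (y s)]
        simp
      rwa [heq] at h
    exact is_const_of_deriv_eq_zero (𝕜 := ℝ)
      (fun s => (key s).differentiableAt) (fun s => (key s).deriv) t 0
  set m0 : ℝ := (∑ i, y 0 i) / n with hm0
  set w : ℝ → Fin n → ℝ := fun t => y t - (fun _ => m0) with hw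
  have hwsum : ∀ t, ∑ i, w t i = 0 := by
    intro t
    simp only [hw, Pi.sub_apply]
    rw [Finset.sum_sub_distrib, hysum t, Finset.sum_const, Finset.card_univ,
      Fintype.card_fin, nsmul_eq_mul, hm0]
    field_simp
    ring
  have hLw : ∀ t, L.mulVec (w t) = L.mulVec (y t) := by
    intro t
    simp only [hw]
    rw [Matrix.mulVec_sub, (hker _).mpr ⟨m0, rfl⟩]
    simp
  have hwd : ∀ t, HasDerivAt w (-(L.mulVec (w t))) t := by
    intro t
    rw [hLw t]
    exact (hyd t).sub_const _
  obtain ⟨lam, hlampos, hgap⟩ := aux_gap hn L hpsd hker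
  set E : ℝ → ℝ := fun t => ∑ i, (w t i)^2 with hE
  set E' : ℝ → ℝ := fun t => ∑ i, 2 * w t i * (-(L.mulVec (w t))) i with hE'
  have hEd : ∀ t, HasDerivAt E (E' t) t := by
    intro t
    apply HasDerivAt.fun_sum
    intro i _
    have hi := hasDerivAt_pi.mp (hwd t) i
    have := hi.fun_pow 2
    simpa [pow_one] using this
  have hE'le : ∀ t, E' t ≤ -(2*lam) * E t := by
    intro t
    have hq := hgap (w t) (hwsum t)
    have hE'eq : E' t = -2 * (w t ⬝ᵥ L.mulVec (w t)) := by
      simp only [hE', dotProduct, Pi.neg_apply]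
      rw [Finset.mul_sum]
      exact Finset.sum_congr rfl fun i _ => by ring
    rw [hE'eq]
    simp only [hE]
    nlinarith [hq]
  have hEnn : ∀ t, 0 ≤ E t := fun t => Finset.sum_nonneg fun i _ => sq_nonneg _
  have hEto0 := aux_decay hlampos hEd hE'le hEnn
  have hwto0 : ∀ i, Tendsto (fun t => w t i) atTop (nhds 0) := by
    intro i
    have hsq : Tendsto (fun t => Real.sqrt (E t)) atTop (nhds 0) := by
      have := (Real.continuous_sqrt.tendsto 0).comp hEto0
      simpa [Function.comp_def] using this
    have habs : ∀ t, |w t i| ≤ Real.sqrt (E t) := by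
      intro t
      rw [← Real.sqrt_sq_eq_abs]
      apply Real.sqrt_le_sqrt
      exact Finset.single_le_sum (fun j _ => sq_nonneg (w t j)) (Finset.mem_univ i)
    apply tendsto_of_tendsto_of_tendsto_of_le_of_le'
      (by simpa using hsq.neg : Tendsto (fun t => -Real.sqrt (E t)) atTop (nhds 0)) hsq
    · exact Filter.Eventually.of_forall fun t => (abs_le.mp (habs t)).1.trans_eq' rfl
    · exact Filter.Eventually.of_forall fun t => (abs_le.mp (habs t)).2
  have part2 : Tendsto (fun t : ℝ => x t - t • c) atTop
      (nhds ((fun _ : Fin n => m0) + z)) := by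
    rw [tendsto_pi_nhds]
    intro i
    have heq : (fun t : ℝ => (x t - t • c) i) = fun t => w t i + (m0 + z i) := by
      funext t
      simp only [hw, hy, Pi.sub_apply, Pi.add_apply]
      ring
    rw [heq]
    have := (hwto0 i).add (tendsto_const_nhds (x := m0 + z i))
    simpa using this
  refine ⟨part1, ⟨_, part2⟩, ?_⟩
  have h1' : Tendsto (fun t : ℝ => t⁻¹ • (x t - t • c)) atTop
      (nhds ((0:ℝ) • ((fun _ : Fin n => m0) + z))) :=
    Filter.Tendsto.smul tendsto_inv_atTop_zero part2
  rw [zero_smul] at h1'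
  have h3 := h1'.add (tendsto_const_nhds (x := c))
  rw [zero_add] at h3
  have h2 : (fun t : ℝ => t⁻¹ • (x t - t • c) + c) =ᶠ[atTop] fun t : ℝ => t⁻¹ • x t := by
    filter_upwards [eventually_gt_atTop (0:ℝ)] with t ht
    rw [smul_sub, smul_smul, inv_mul_cancel₀ ht.ne', one_smul]
    abel
  exact Tendsto.congr' h2 h3
end

section
/- Let C > 0 and let x : [0, T) → ℝ be differentiable with x′(t) ≤ C|x(t)| + x(t) − x(t)² for all t ∈ [0, T), and suppose x(0) < −C. Then x(t) < −C for all t ∈ [0, T) and x′(t) < 0 for all t ∈ [0, T); i.e., x is strictly decreasing and never reaches an equilibrium. -/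
/-!
For `y ≤ -C` the right-hand side `C|y| + y - y²` is negative. By a barrier argument `x` can
never climb back to its initial value: wherever it equals `x 0 < -C` its derivative is
negative. Hence `x t ≤ x 0 < -C` throughout, and then `x' t < 0`.
-/

open Set

theorem mul_abs_add_sub_sq_neg {C y : ℝ} (hC : 0 < C) (hy : y ≤ -C) :
    C * |y| + y - y ^ 2 < 0 := by
  rw [abs_of_neg (by linarith)]
  nlinarith

theorem image_le_left_of_deriv_neg_on_level {f f' : ℝ → ℝ} {a b : ℝ}
    (hf : ∀ t ∈ Ico a b, HasDerivWithinAt f (f' t) (Ico a b) t)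
    (hneg : ∀ t ∈ Ico a b, f t = f a → f' t < 0) :
    ∀ t ∈ Ico a b, f t ≤ f a := by
  intro t ht
  have hsub : Icc a t ⊆ Ico a b := Icc_subset_Ico_right ht.2
  have hsub' : Ico a t ⊆ Ico a b := Ico_subset_Ico_right ht.2.le
  exact image_le_of_deriv_right_lt_deriv_boundary' (B := fun _ => f a) (B' := 0)
    ((HasDerivWithinAt.continuousOn hf).mono hsub)
    (fun s hs => (hf s (hsub' hs)).mono_of_mem_nhdsWithin (Ico_mem_nhdsGE_of_mem (hsub' hs)))
    le_rfl continuousOn_const (fun _ _ => hasDerivWithinAt_const _ _ _)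
    (fun s hs => hneg s (hsub' hs)) ⟨ht.1, le_rfl⟩

/-- **Monotone decay in GREAD-F.**
Let `C > 0` and `x : [0, T) → ℝ` be differentiable with
`x′(t) ≤ C |x t| + x t − (x t)²` on `[0, T)` and `x 0 < −C`.  Then
`x t < −C` and `x′(t) < 0` for all `t ∈ [0, T)`: `x` is strictly decreasing
and never reaches an equilibrium. -/
theorem gread_f_strictly_decreasing
    (C T : ℝ) (hC : 0 < C) (x x' : ℝ → ℝ)
    (hderiv : ∀ t ∈ Set.Ico (0 : ℝ) T, HasDerivWithinAt x (x' t) (Set.Ico 0 T) t)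
    (hineq : ∀ t ∈ Set.Ico (0 : ℝ) T, x' t ≤ C * |x t| + x t - (x t) ^ 2)
    (h0 : x 0 < -C) :
    ∀ t ∈ Set.Ico (0 : ℝ) T, x t < -C ∧ x' t < 0 := by
  have hderiv_neg : ∀ t ∈ Ico (0 : ℝ) T, x t ≤ -C → x' t < 0 := fun t ht hxt =>
    (hineq t ht).trans_lt (mul_abs_add_sub_sq_neg hC hxt)
  have hbelow : ∀ t ∈ Ico (0 : ℝ) T, x t ≤ x 0 :=
    image_le_left_of_deriv_neg_on_level hderiv fun t ht hxt => hderiv_neg t ht (hxt ▸ h0.le)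
  intro t ht
  have hxt : x t < -C := (hbelow t ht).trans_lt h0
  exact ⟨hxt, hderiv_neg t ht hxt.le⟩
end

section
/- Let L be an n×n real symmetric positive semidefinite matrix with L𝟙 = 0 and largest eigenvalue at most 2Δ for some Δ > 0, and let α > β > 0. Define L̃ = (β − α)L + βI. Then: (i) L̃𝟙 = β𝟙, so β is an eigenvalue of L̃ with the all-ones eigenvector; (ii) every eigenvalue of L̃ lies in the interval [β − 2Δ(α − β), β]; and (iii) every solution of ẋ(t) = L̃ x(t) satisfies 𝟙ᵀx(t) = e^{βt}·𝟙ᵀx(0), so if 𝟙ᵀx(0) ≠ 0 then ‖x(t)‖ → ∞ as t → ∞ and no stable global equilibrium exists. -/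
open Matrix Filter

/-- **Analysis of GREAD-FB***.
Let `L` be symmetric positive semidefinite with `L 𝟙 = 0` and all eigenvalues
at most `2Δ`, and let `α > β > 0`.  With `L̃ = (β − α) L + β I`:
(i) `L̃ 𝟙 = β 𝟙`; (ii) every eigenvalue of `L̃` lies in `[β − 2Δ(α − β), β]`;
(iii) every solution of `ẋ = L̃ x` has `𝟙ᵀ x(t) = e^{βt} 𝟙ᵀ x(0)`, so if
`𝟙ᵀ x(0) ≠ 0` then `‖x t‖ → ∞`. -/
theorem gread_fb_star_analysis
    {n : ℕ} (L : Matrix (Fin n) (Fin n) ℝ) (Δ α β : ℝ)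
    (hΔ : 0 < Δ) (hβα : β < α) (hβ : 0 < β)
    (hsymm : L.IsSymm) (hpsd : L.PosSemidef)
    (hL1 : L.mulVec (fun _ => 1) = 0)
    (heig : ∀ (μ : ℝ) (v : Fin n → ℝ), v ≠ 0 → L.mulVec v = μ • v → μ ≤ 2 * Δ) :
    (((β - α) • L + β • (1 : Matrix (Fin n) (Fin n) ℝ)).mulVec (fun _ => 1)
        = β • (fun _ : Fin n => (1 : ℝ))) ∧
    (∀ (μ : ℝ) (v : Fin n → ℝ), v ≠ 0 →
      ((β - α) • L + β • (1 : Matrix (Fin n) (Fin n) ℝ)).mulVec v = μ • v →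
      μ ∈ Set.Icc (β - 2 * Δ * (α - β)) β) ∧
    (∀ x : ℝ → Fin n → ℝ,
      (∀ t : ℝ, HasDerivAt x
        (((β - α) • L + β • (1 : Matrix (Fin n) (Fin n) ℝ)).mulVec (x t)) t) →
      (∀ t : ℝ, ∑ i, x t i = Real.exp (β * t) * ∑ i, x 0 i) ∧
      ((∑ i, x 0 i) ≠ 0 →
        Filter.Tendsto (fun t : ℝ => ‖x t‖) Filter.atTop Filter.atTop)) := by
  set M : Matrix (Fin n) (Fin n) ℝ := (β - α) • L + β • (1 : Matrix (Fin n) (Fin n) ℝ) with hM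
  have hαβ : β - α ≠ 0 := by linarith
  -- (i)
  have part1 : M.mulVec (fun _ => 1) = β • (fun _ : Fin n => (1 : ℝ)) := by
    simp [hM, Matrix.add_mulVec, Matrix.smul_mulVec, hL1, Matrix.one_mulVec]
  refine ⟨part1, ?_, ?_⟩
  · -- (ii)
    intro μ v hv hMv
    have hLv : L.mulVec v = ((μ - β) / (β - α)) • v := by
      have h1 : (β - α) • L.mulVec v = (μ - β) • v := by
        have := hMv
        rw [hM, Matrix.add_mulVec, Matrix.smul_mulVec, Matrix.smul_mulVec,
          Matrix.one_mulVec] at this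
        have : (β - α) • L.mulVec v = μ • v - β • v := by
          rw [← this]; abel
        rw [this, sub_smul]
      have := congrArg (fun w => (β - α)⁻¹ • w) h1
      simpa [smul_smul, inv_mul_cancel₀ hαβ, div_eq_inv_mul, mul_comm] using this
    set lam : ℝ := (μ - β) / (β - α) with hlam
    have hle : lam ≤ 2 * Δ := heig lam v hv hLv
    have hnn : 0 ≤ lam := by
      have h1 : 0 ≤ v ⬝ᵥ L.mulVec v := by simpa using hpsd.dotProduct_mulVec_nonneg v
      have h2 : v ⬝ᵥ L.mulVec v = lam * (v ⬝ᵥ v) := by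
        rw [hLv]; simp [dotProduct_smul, smul_eq_mul]
      have h3 : 0 < v ⬝ᵥ v := by
        have hnn' : 0 ≤ v ⬝ᵥ v := Finset.sum_nonneg fun i _ => mul_self_nonneg _
        rcases hnn'.lt_or_eq with h | h
        · exact h
        · exact absurd (dotProduct_self_eq_zero.mp h.symm) hv
      nlinarith
    have hμ : μ = β + (β - α) * lam := by
      rw [hlam]; field_simp; ring
    constructor
    · nlinarith
    · nlinarith
  · -- (iii)
    intro x hx
    -- column sums of M are all β
    have hcol : ∀ j, (∑ i, M i j) = β := by
      intro j
      have hMsymm : M.IsSymm := by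
        rw [hM]; exact ((hsymm.smul _)).add ((Matrix.isSymm_one).smul _)
      have := congrFun part1 j
      rw [Matrix.mulVec, dotProduct] at this
      simp only [mul_one] at this
      calc (∑ i, M i j) = ∑ i, M j i := by
            refine Finset.sum_congr rfl fun i _ => ?_
            have := congrFun (congrFun hMsymm.eq j) i
            simpa [Matrix.transpose_apply] using this
        _ = β := by simpa using this
    set s : ℝ → ℝ := fun t => ∑ i, x t i with hs
    have hds : ∀ t, HasDerivAt s (β * s t) t := by
      intro t
      have h1 : HasDerivAt s (∑ i, (M.mulVec (x t)) i) t := by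
        apply HasDerivAt.fun_sum
        intro i _
        exact ((ContinuousLinearMap.proj i : (Fin n → ℝ) →L[ℝ] ℝ).hasFDerivAt.comp_hasDerivAt
          t (hx t))
      have h2 : (∑ i, (M.mulVec (x t)) i) = β * s t := by
        simp only [Matrix.mulVec, dotProduct]
        rw [Finset.sum_comm]
        rw [hs, Finset.mul_sum]
        refine Finset.sum_congr rfl fun j _ => ?_
        rw [← Finset.sum_mul, hcol j]
      rwa [h2] at h1
    have hsol : ∀ t, s t = Real.exp (β * t) * s 0 := by
      have key : ∀ t, Real.exp (-(β * t)) * s t = Real.exp (-(β * 0)) * s 0 := by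
        intro t
        set g : ℝ → ℝ := fun u => Real.exp (-(β * u)) * s u with hg
        have hdg : ∀ u, HasDerivAt g 0 u := by
          intro u
          have he : HasDerivAt (fun u : ℝ => Real.exp (-(β * u))) (-β * Real.exp (-(β * u))) u := by
            have : HasDerivAt (fun u : ℝ => -(β * u)) (-β) u := by
              simpa using ((hasDerivAt_id u).const_mul β).fun_neg
            simpa [mul_comm] using this.exp
          have := he.fun_mul (hds u)
          refine this.congr_deriv ?_
          ring
        have hdiff : Differentiable ℝ g := fun u => (hdg u).differentiableAt
        have hderiv : ∀ u, deriv g u = 0 := fun u => (hdg u).deriv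
        exact is_const_of_deriv_eq_zero hdiff hderiv t 0
      intro t
      have := key t
      have he : Real.exp (-(β * t)) ≠ 0 := Real.exp_ne_zero _
      rw [mul_zero, neg_zero, Real.exp_zero, one_mul, Real.exp_neg] at this
      rw [← this, ← mul_assoc, mul_inv_cancel₀ (Real.exp_pos _).ne', one_mul]
    refine ⟨fun t => hsol t, ?_⟩
    intro hs0
    -- ‖x t‖ ≥ |s t| / n
    have hn : 0 < (n : ℝ) := by
      rcases Nat.eq_zero_or_pos n with h | h
      · exfalso; apply hs0; subst h; simp [hs]
      · exact_mod_cast h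
    have hbound : ∀ t, Real.exp (β * t) * (|s 0| / n) ≤ ‖x t‖ := by
      intro t
      have h1 : |s t| ≤ n * ‖x t‖ := by
        calc |s t| ≤ ∑ i, |x t i| := Finset.abs_sum_le_sum_abs _ _
          _ ≤ ∑ _i : Fin n, ‖x t‖ := by
              refine Finset.sum_le_sum fun i _ => ?_
              exact norm_le_pi_norm (x t) i
          _ = n * ‖x t‖ := by simp [Finset.sum_const, mul_comm]
      have h2 : |s t| = Real.exp (β * t) * |s 0| := by
        rw [hsol t, abs_mul, abs_of_pos (Real.exp_pos _)]
      calc Real.exp (β * t) * (|s 0| / n) = |s t| / n := by rw [h2]; ring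
        _ ≤ ‖x t‖ := by rw [div_le_iff₀ hn]; linarith
    have hlim : Tendsto (fun t : ℝ => Real.exp (β * t) * (|s 0| / n)) atTop atTop := by
      apply Tendsto.atTop_mul_const (by positivity : 0 < |s 0| / (n:ℝ))
      exact (Real.tendsto_exp_atTop).comp (tendsto_atTop_atTop_of_monotone
        (fun a b hab => by nlinarith) (fun b => ⟨b / β, by field_simp; exact le_rfl⟩))
    exact tendsto_atTop_mono hbound hlim
end

section
/- Let d > 0, u, α ∈ ℝ, let A be an N×N real row-stochastic matrix (entrywise nonnegative with all row sums 1), and let b ∈ ℝ^N be a vector with two distinct entries, i.e., b_m ≠ b_n for some m ≠ n. Consider the dynamics ẋ = −dx + tanh[u((α−1)x + (A + I)x)] + b, where tanh acts entrywise. Then no consensus state is an equilibrium: there is no x̄ ∈ ℝ such that the constant vector x̄·𝟙 satisfies −d x̄ 𝟙 + tanh[u((α−1)x̄𝟙 + (A+I)x̄𝟙)] + b = 0. Consequently, since all trajectories converge to equilibria, the BIMP model does not exhibit oversmoothing when the input parameter b has non-identical entries. -/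
/-!
A row-stochastic matrix fixes constant vectors, so `(A + I)(x̄ 𝟙) = 2 x̄ 𝟙` and the vector field at a
consensus state `x̄ 𝟙` is `c 𝟙 + b` for the single number `c = -d x̄ + tanh(u (α + 1) x̄)`. Its vanishing
would force `b = -c 𝟙` to be constant.
-/

namespace Matrix

variable {ι R : Type*} [Fintype ι] [NonAssocSemiring R]

theorem mulVec_const_of_sum_row_eq_one {A : Matrix ι ι R} (hA : ∀ i, ∑ j, A i j = 1) (c : R) :
    A *ᵥ (fun _ => c) = fun _ => c := by
  ext i
  simp only [mulVec, dotProduct, ← Finset.sum_mul, hA, one_mul]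

theorem add_one_mulVec_const_of_sum_row_eq_one [DecidableEq ι] {A : Matrix ι ι R}
    (hA : ∀ i, ∑ j, A i j = 1) (c : R) :
    (A + 1) *ᵥ (fun _ => c) = fun _ => c + c := by
  rw [add_mulVec, one_mulVec, mulVec_const_of_sum_row_eq_one hA]
  rfl

end Matrix

theorem bimp_no_consensus_equilibrium_general
    {N : ℕ} (d u α : ℝ)
    (A : Matrix (Fin N) (Fin N) ℝ)
    (hA_row : ∀ i, ∑ j, A i j = 1)
    (b : Fin N → ℝ) (m n : Fin N) (hb : b m ≠ b n) :
    ¬ ∃ xbar : ℝ,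
      (-d) • (fun _ : Fin N => xbar)
        + (fun i => Real.tanh (u * ((α - 1) * xbar
            + (A + 1).mulVec (fun _ => xbar) i)))
        + b = 0 := by
  rintro ⟨x, hx⟩
  have hb_eq : ∀ i, b i = d * x - Real.tanh (u * ((α - 1) * x + (x + x))) := by
    intro i
    have hi := congrFun hx i
    simp only [Matrix.add_one_mulVec_const_of_sum_row_eq_one hA_row, Pi.add_apply, Pi.smul_apply,
      smul_eq_mul, Pi.zero_apply] at hi
    linarith
  exact hb (by rw [hb_eq m, hb_eq n])

/-- **Dissensus in BIMP: no consensus equilibrium.**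
With `A` row-stochastic and an input `b` having two distinct entries, the
dynamics `ẋ = −d x + tanh[u((α−1)x + (A+I)x)] + b` admit no consensus
equilibrium: no constant vector `x̄ 𝟙` makes the vector field vanish. -/
theorem bimp_no_consensus_equilibrium
    {N : ℕ} (d u α : ℝ) (hd : 0 < d)
    (A : Matrix (Fin N) (Fin N) ℝ)
    (hA_nonneg : ∀ i j, 0 ≤ A i j) (hA_row : ∀ i, ∑ j, A i j = 1)
    (b : Fin N → ℝ) (m n : Fin N) (hmn : m ≠ n) (hb : b m ≠ b n) :
    ¬ ∃ xbar : ℝ,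
      (-d) • (fun _ : Fin N => xbar)
        + (fun i => Real.tanh (u * ((α - 1) * xbar
            + (A + 1).mulVec (fun _ => xbar) i)))
        + b = 0 :=
  bimp_no_consensus_equilibrium_general d u α A hA_row b m n hb
end

section
/- Let d > 0, α ≥ 0, u = d/(α+3), Δt > 0 with dΔt < 1, and let Ã be an N×N real matrix with all entries nonnegative and every row sum equal to 4. For t = 1, …, M−1 let s^{(t)} ∈ ℝ^N with entries in (0, 1], and set J_t = (1 − dΔt)·I + Δt·u·((α−1)I + Ã)·diag(s^{(t)}). Then the product satisfies ‖J_{M−1} J_{M−2} ⋯ J_1‖_∞ ≤ (1 + 4uΔt)^{M−1}. In particular, the Jacobian ∂x^M/∂x^1 of the forward-Euler-discretized BIMP network through M layers has ∞-operator norm at most (1 + 4uΔt)^{M−1}, so BIMP gradients do not explode at any finite depth. -/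
open Finset Matrix

lemma row_abs_sum_mul {N : ℕ} (A B : Matrix (Fin N) (Fin N) ℝ) (i : Fin N) :
    ∑ j, |(A * B) i j| ≤ ∑ k, |A i k| * ∑ j, |B k j| := by
  calc ∑ j, |(A * B) i j| ≤ ∑ j, ∑ k, |A i k| * |B k j| := by
        refine Finset.sum_le_sum fun j _ => ?_
        rw [Matrix.mul_apply]
        refine (Finset.abs_sum_le_sum_abs _ _).trans ?_
        refine Finset.sum_le_sum fun k _ => ?_
        rw [abs_mul]
    _ = ∑ k, |A i k| * ∑ j, |B k j| := by
        rw [Finset.sum_comm]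
        simp [Finset.mul_sum]

lemma list_prod_row_bound {N : ℕ} (c : ℝ) (hc : 1 ≤ c)
    (L : List (Matrix (Fin N) (Fin N) ℝ))
    (h : ∀ A ∈ L, ∀ i, ∑ j, |A i j| ≤ c) :
    ∀ i, ∑ j, |L.prod i j| ≤ c ^ L.length := by
  induction L with
  | nil =>
    intro i
    simp [Matrix.one_apply, apply_ite abs]
  | cons A L ih =>
    intro i
    rw [List.prod_cons]
    have hL : ∀ B ∈ L, ∀ i, ∑ j, |B i j| ≤ c := fun B hB => h B (List.mem_cons_of_mem _ hB)
    calc ∑ j, |(A * L.prod) i j| ≤ ∑ k, |A i k| * ∑ j, |L.prod k j| := row_abs_sum_mul ..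
      _ ≤ ∑ k, |A i k| * c ^ L.length := by
          refine Finset.sum_le_sum fun k _ => ?_
          exact mul_le_mul_of_nonneg_left (ih hL k) (abs_nonneg _)
      _ = (∑ k, |A i k|) * c ^ L.length := by rw [Finset.sum_mul]
      _ ≤ c * c ^ L.length := by
          exact mul_le_mul_of_nonneg_right (h A List.mem_cons_self i)
            (pow_nonneg (by linarith) _)
      _ = c ^ (A :: L).length := by rw [List.length_cons, pow_succ]; ring

/-- **BIMP gradients do not explode.**
With `u = d/(α+3)`, `dΔt < 1`, `At` entrywise nonnegative with row sums `4`,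
and per-layer Jacobians `J t = (1 − dΔt) I + Δt u ((α−1)I + At) diag(s t)` with
`s t` entrywise in `(0, 1]` for `1 ≤ t ≤ M − 1`, the product
`J (M−1) * J (M−2) * ⋯ * J 1` has ∞-operator norm (max absolute row sum) at
most `(1 + 4uΔt)^(M−1)`. -/
theorem bimp_gradient_product_bound
    {N : ℕ} (d α Δt u : ℝ) (hd : 0 < d) (hα : 0 ≤ α)
    (hu : u = d / (α + 3)) (hΔt : 0 < Δt) (hdΔt : d * Δt < 1)
    (At : Matrix (Fin N) (Fin N) ℝ)
    (hnonneg : ∀ i j, 0 ≤ At i j) (hrow : ∀ i, ∑ j, At i j = 4)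
    (M : ℕ) (s : ℕ → Fin N → ℝ)
    (hs : ∀ t, 1 ≤ t → t ≤ M - 1 → ∀ j, 0 < s t j ∧ s t j ≤ 1)
    (J : ℕ → Matrix (Fin N) (Fin N) ℝ)
    (hJ : ∀ t, J t = (1 - d * Δt) • (1 : Matrix (Fin N) (Fin N) ℝ)
      + (Δt * u) • (((α - 1) • (1 : Matrix (Fin N) (Fin N) ℝ) + At)
          * Matrix.diagonal (s t))) :
    ∀ i, ∑ j, |(((List.range (M - 1)).map (fun k => J (M - 1 - k))).prod) i j|
      ≤ (1 + 4 * u * Δt) ^ (M - 1) := by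
  have hu0 : 0 < u := by rw [hu]; positivity
  have huα : u * (α + 3) = d := by rw [hu]; field_simp
  have hc : 1 ≤ 1 + 4 * u * Δt := by nlinarith
  have key : ∀ A ∈ (List.range (M - 1)).map (fun k => J (M - 1 - k)), ∀ i,
      ∑ j, |A i j| ≤ 1 + 4 * u * Δt := by
    intro A hA i
    rw [List.mem_map] at hA
    obtain ⟨k, hk, rfl⟩ := hA
    rw [List.mem_range] at hk
    set t := M - 1 - k with ht
    have hst := hs t (by omega) (by omega)
    rw [hJ t]
    have step1 : ∀ j, |((1 - d * Δt) • (1 : Matrix (Fin N) (Fin N) ℝ)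
        + (Δt * u) • (((α - 1) • (1 : Matrix (Fin N) (Fin N) ℝ) + At)
          * Matrix.diagonal (s t))) i j|
        ≤ (if i = j then (1 - d * Δt) + Δt * u * (|α - 1| * s t j) else 0)
          + Δt * u * (At i j * s t j) := by
      intro j
      have hsj := hst j
      have hij : ((1 - d * Δt) • (1 : Matrix (Fin N) (Fin N) ℝ)
        + (Δt * u) • (((α - 1) • (1 : Matrix (Fin N) (Fin N) ℝ) + At)
          * Matrix.diagonal (s t))) i j
          = (1 - d * Δt) * (if i = j then 1 else 0)
            + Δt * u * (((α - 1) * (if i = j then 1 else 0) + At i j) * s t j) := by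
        simp [Matrix.add_apply, Matrix.smul_apply, Matrix.mul_diagonal, Matrix.one_apply,
          smul_eq_mul]
      rw [hij]
      by_cases h : i = j
      · simp only [if_pos h, mul_one]
        have h4 : |α - 1 + At i j| ≤ |α - 1| + At i j :=
          (abs_add_le _ _).trans (by rw [abs_of_nonneg (hnonneg i j)])
        have e2 : |Δt * u * ((α - 1 + At i j) * s t j)|
            ≤ Δt * u * ((|α - 1| + At i j) * s t j) := by
          rw [abs_mul, abs_mul, abs_mul, abs_of_pos hΔt, abs_of_pos hu0,
            abs_of_pos hsj.1]
          nlinarith [mul_pos (mul_pos hΔt hu0) hsj.1]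
        have e1 : |1 - d * Δt| = 1 - d * Δt := abs_of_nonneg (by linarith)
        calc |1 - d * Δt + Δt * u * ((α - 1 + At i j) * s t j)|
            ≤ |1 - d * Δt| + |Δt * u * ((α - 1 + At i j) * s t j)| := abs_add_le _ _
          _ ≤ 1 - d * Δt + Δt * u * (|α - 1| * s t j) + Δt * u * (At i j * s t j) := by
              rw [e1]; nlinarith [e2]
          _ = (1 - d * Δt + Δt * u * (|α - 1| * s t j)) + Δt * u * (At i j * s t j) := by
              ring
      · simp only [if_neg h, mul_zero, zero_mul, zero_add, zero_mul]
        rw [abs_mul, abs_mul, abs_mul, abs_of_pos hΔt, abs_of_pos hu0,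
          abs_of_nonneg (hnonneg i j), abs_of_pos hsj.1]
    calc ∑ j, |((1 - d * Δt) • (1 : Matrix (Fin N) (Fin N) ℝ)
        + (Δt * u) • (((α - 1) • (1 : Matrix (Fin N) (Fin N) ℝ) + At)
          * Matrix.diagonal (s t))) i j|
        ≤ ∑ j, ((if i = j then (1 - d * Δt) + Δt * u * (|α - 1| * s t j) else 0)
            + Δt * u * (At i j * s t j)) := Finset.sum_le_sum fun j _ => step1 j
      _ = ((1 - d * Δt) + Δt * u * (|α - 1| * s t i))
            + Δt * u * ∑ j, At i j * s t j := by
          rw [Finset.sum_add_distrib, Finset.sum_ite_eq, if_pos (Finset.mem_univ i),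
            ← Finset.mul_sum]
      _ ≤ 1 + 4 * u * Δt := by
          have hS : ∑ j, At i j * s t j ≤ 4 := by
            rw [← hrow i]
            exact Finset.sum_le_sum fun j _ =>
              mul_le_of_le_one_right (hnonneg i j) (hst j).2
          have hSi : (s t i) ≤ 1 := (hst i).2
          have hSi0 : 0 < s t i := (hst i).1
          have habs : |α - 1| ≤ α + 3 := abs_le.2 ⟨by linarith, by linarith⟩
          have h0 : (0:ℝ) ≤ |α - 1| := abs_nonneg _
          nlinarith [mul_pos hΔt hu0, mul_nonneg (mul_pos hΔt hu0).le h0]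
  have := list_prod_row_bound _ hc _ key
  simpa using this
end
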